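/- arXiv:2410.04897 — 2 statements merged into one kernel-verified Lean document; each statement's English description precedes it below -/
import Mathlib

section
/- Let D = (V, A) be a finite digraph in which every vertex has out-degree at least one, and let k be an integer with 1 ≤ k ≤ |V|. Let D̃ be the digraph obtained from D by subdividing every vertex into a path on k vertices: for each v ∈ V, D̃ has vertices v¹, ..., v^k and arcs (v^i, v^{i+1}) for 1 ≤ i ≤ k−1, and for each arc (u, v) ∈ A, D̃ has the arc (u^k, v¹). Then cn(D) ≤ k if and only if cn(D̃) ≤ 1. -/
open scoped Classical

/-- The out-neighborhood of a set `S` in the digraph with arc relation `A`. -/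
noncomputable def Nplus {V : Type} [Fintype V] (A : V → V → Prop) (S : Finset V) : Finset V :=
  Finset.univ.filter (fun y => ∃ x ∈ S, A x y)

/-- The robber territories associated with a cop strategy `W` (0-indexed:
`terr A W i` is the paper's `R_{i+1}`). -/
noncomputable def terr {V : Type} [Fintype V] [DecidableEq V]
    (A : V → V → Prop) (W : ℕ → Finset V) : ℕ → Finset V
  | 0 => Finset.univ \ W 0
  | i + 1 => Nplus A (terr A W i) \ W (i + 1)

/-- A cop strategy uses at most `k` cops. -/
def UsesAtMost {V : Type} (W : ℕ → Finset V) (k : ℕ) : Prop :=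
  ∀ i, (W i).card ≤ k

/-- The cop number: the least `k` admitting a winning strategy using `k` cops. -/
noncomputable def copNumber {V : Type} [Fintype V] [DecidableEq V] (A : V → V → Prop) : ℕ :=
  sInf {k | ∃ W : ℕ → Finset V, UsesAtMost W k ∧ ∃ t, terr A W t = ∅}

/-- The digraph `D̃` obtained from `D` by subdividing every vertex `v` into a path
`v¹, ..., v^k` (here `(v, 0), ..., (v, k-1)`), with the arc `(u^k, v¹)` for every
arc `(u, v)` of `D`. -/
def subdivide {V : Type} (A : V → V → Prop) (k : ℕ) :
    V × Fin k → V × Fin k → Prop :=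
  fun p q =>
    (p.1 = q.1 ∧ (q.2 : ℕ) = (p.2 : ℕ) + 1) ∨
    ((p.2 : ℕ) = k - 1 ∧ (q.2 : ℕ) = 0 ∧ A p.1 q.1)

section Helpers

variable {V : Type} [Fintype V] [DecidableEq V]

lemma mem_Nplus {A : V → V → Prop} {S : Finset V} {y : V} :
    y ∈ Nplus A S ↔ ∃ x ∈ S, A x y := by
  simp [Nplus]

lemma Nplus_mono {A : V → V → Prop} {S T : Finset V} (h : S ⊆ T) :
    Nplus A S ⊆ Nplus A T := by
  intro y hy
  rw [mem_Nplus] at hy ⊢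
  obtain ⟨x, hx, hA⟩ := hy
  exact ⟨x, h hx, hA⟩

lemma Nplus_empty (A : V → V → Prop) : Nplus A (∅ : Finset V) = ∅ := by
  ext y; simp [Nplus]

lemma terr_succ (A : V → V → Prop) (W : ℕ → Finset V) (i : ℕ) :
    terr A W (i+1) = Nplus A (terr A W i) \ W (i+1) := rfl

lemma terr_zero (A : V → V → Prop) (W : ℕ → Finset V) :
    terr A W 0 = Finset.univ \ W 0 := rfl

lemma notMem_of_mem_terr {A : V → V → Prop} {W : ℕ → Finset V} {i : ℕ} {v : V}
    (h : v ∈ terr A W i) : v ∉ W i := by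
  cases i with
  | zero => rw [terr_zero, Finset.mem_sdiff] at h; exact h.2
  | succ i => rw [terr_succ, Finset.mem_sdiff] at h; exact h.2

lemma copNumber_le_iff (A : V → V → Prop) (k : ℕ) :
    copNumber A ≤ k ↔ ∃ W : ℕ → Finset V, UsesAtMost W k ∧ ∃ t, terr A W t = ∅ := by
  constructor
  · intro h
    have hne : copNumber A ∈ {m | ∃ W : ℕ → Finset V, UsesAtMost W m ∧ ∃ t, terr A W t = ∅} := by
      apply Nat.sInf_mem
      exact ⟨Fintype.card V, fun _ => Finset.univ,
        fun i => by simp, 0, by simp [terr_zero]⟩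
    obtain ⟨W, hW, t, ht⟩ := hne
    exact ⟨W, fun i => (hW i).trans h, t, ht⟩
  · rintro ⟨W, hW, t, ht⟩
    exact Nat.sInf_le ⟨W, hW, t, ht⟩

lemma mod_succ_of_ne {k : ℕ} (hk : 0 < k) {n : ℕ} (h : n % k ≠ k - 1) :
    (n+1) % k = n % k + 1 := by
  have h1 : n % k < k := Nat.mod_lt _ hk
  have h2 : n % k + 1 < k := by omega
  rw [← Nat.mod_add_mod, Nat.mod_eq_of_lt h2]

lemma mod_succ_of_eq {k : ℕ} (hk : 0 < k) {n : ℕ} (h : n % k = k - 1) :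
    (n+1) % k = 0 := by
  rw [← Nat.mod_add_mod, h]
  have h2 : k - 1 + 1 = k := by omega
  rw [h2, Nat.mod_self]

lemma mod_pred {k : ℕ} (hk : 0 < k) {n : ℕ} (h : (n+1) % k = 0) : n % k = k - 1 := by
  by_contra hne
  rw [mod_succ_of_ne hk hne] at h
  omega

/-- Phase: `m % k` as an element of `Fin k`. -/
def ph {k : ℕ} (hk : 0 < k) (m : ℕ) : Fin k := ⟨m % k, Nat.mod_lt m hk⟩

/-- The class-`c` part of the robber territory in the subdivided digraph,
viewed in the base digraph. -/
noncomputable def classTerr {k : ℕ} (A : V → V → Prop) (hk : 0 < k)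
    (W : ℕ → Finset (V × Fin k)) (c s : ℕ) : Finset V :=
  Finset.univ.filter (fun v => (v, ph hk (c + s)) ∈ terr (subdivide A k) W s)

lemma classTerr_zero {k : ℕ} (A : V → V → Prop) (hk : 0 < k)
    (W : ℕ → Finset (V × Fin k)) (c : ℕ) :
    classTerr A hk W c 0 =
      Finset.univ \ Finset.univ.filter (fun v => (v, ph hk c) ∈ W 0) := by
  ext v
  simp [classTerr, terr_zero]

lemma classTerr_succ {k : ℕ} (A : V → V → Prop) (hk : 0 < k)
    (W : ℕ → Finset (V × Fin k)) (c s : ℕ) :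
    classTerr A hk W c (s+1) =
      (if (c + s + 1) % k = 0 then Nplus A (classTerr A hk W c s)
        else classTerr A hk W c s) \
        Finset.univ.filter (fun v => (v, ph hk (c + s + 1)) ∈ W (s+1)) := by
  have hkey : ∀ v : V,
      ((v, ph hk (c + s + 1)) ∈ terr (subdivide A k) W (s+1)) ↔
      ((v, ph hk (c + s + 1)) ∈ Nplus (subdivide A k) (terr (subdivide A k) W s) ∧
        (v, ph hk (c + s + 1)) ∉ W (s+1)) := by
    intro v
    rw [terr_succ, Finset.mem_sdiff]
  ext v
  simp only [classTerr, Finset.mem_filter, Finset.mem_univ, true_and, Finset.mem_sdiff]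
  rw [show c + (s+1) = c + s + 1 from by ring, hkey]
  have hph1 : (ph hk (c + s + 1) : ℕ) = (c + s + 1) % k := rfl
  by_cases h0 : (c + s + 1) % k = 0
  · have hpred : (c + s) % k = k - 1 := mod_pred hk h0
    rw [if_pos h0]
    constructor
    · rintro ⟨hn, hnot⟩
      rw [mem_Nplus] at hn
      obtain ⟨⟨u, j⟩, hmem, hsub⟩ := hn
      refine ⟨?_, hnot⟩
      rw [mem_Nplus]
      rcases hsub with ⟨_, hj⟩ | ⟨hj, _, hA⟩
      · exfalso; rw [hph1, h0] at hj; omega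
      · refine ⟨u, ?_, hA⟩
        simp only [Finset.mem_filter, Finset.mem_univ, true_and]
        have : (j : Fin k) = ph hk (c + s) := by
          apply Fin.ext
          rw [hj]; exact (by rw [show (ph hk (c+s) : ℕ) = (c+s) % k from rfl, hpred])
        rwa [← this]
    · rintro ⟨hn, hnot⟩
      rw [mem_Nplus] at hn
      obtain ⟨u, hu, hA⟩ := hn
      simp only [Finset.mem_filter, Finset.mem_univ, true_and] at hu
      refine ⟨?_, hnot⟩
      rw [mem_Nplus]
      refine ⟨(u, ph hk (c + s)), hu, Or.inr ⟨?_, ?_, hA⟩⟩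
      · show (c + s) % k = k - 1; exact hpred
      · show (c + s + 1) % k = 0; exact h0
  · have hne : (c + s) % k ≠ k - 1 := fun h => h0 (mod_succ_of_eq hk h)
    have hval : (c + s + 1) % k = (c + s) % k + 1 := mod_succ_of_ne hk hne
    rw [if_neg h0]
    constructor
    · rintro ⟨hn, hnot⟩
      rw [mem_Nplus] at hn
      obtain ⟨⟨u, j⟩, hmem, hsub⟩ := hn
      refine ⟨?_, hnot⟩
      simp only [Finset.mem_filter, Finset.mem_univ, true_and]
      rcases hsub with ⟨hu, hj⟩ | ⟨_, hj, _⟩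
      · simp only at hu hj
        rw [hph1, hval] at hj
        have hjv : (j : ℕ) = (c + s) % k := by omega
        have : (j : Fin k) = ph hk (c + s) := Fin.ext hjv
        rw [← hu, ← this]; exact hmem
      · exfalso; rw [hph1, hval] at hj; omega
    · rintro ⟨hu, hnot⟩
      simp only [Finset.mem_filter, Finset.mem_univ, true_and] at hu
      refine ⟨?_, hnot⟩
      rw [mem_Nplus]
      refine ⟨(v, ph hk (c + s)), hu, Or.inl ⟨rfl, ?_⟩⟩
      show (c + s + 1) % k = (c + s) % k + 1
      exact hval

lemma classTerr_empty_succ {k : ℕ} (A : V → V → Prop) (hk : 0 < k)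
    (W : ℕ → Finset (V × Fin k)) (c s : ℕ) (h : classTerr A hk W c s = ∅) :
    classTerr A hk W c (s+1) = ∅ := by
  rw [classTerr_succ, h]
  rcases Classical.em ((c + s + 1) % k = 0) with h0 | h0 <;>
    simp [h0, Nplus_empty]

lemma classTerr_empty_mono {k : ℕ} (A : V → V → Prop) (hk : 0 < k)
    (W : ℕ → Finset (V × Fin k)) (c : ℕ) {s s' : ℕ} (hss : s ≤ s')
    (h : classTerr A hk W c s = ∅) : classTerr A hk W c s' = ∅ := by
  obtain ⟨d, rfl⟩ := Nat.exists_eq_add_of_le hss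
  induction d with
  | zero => exact h
  | succ d ih => exact classTerr_empty_succ A hk W c (s + d) (ih (Nat.le_add_right s d))

lemma terr_subdivide_empty_iff {k : ℕ} (A : V → V → Prop) (hk : 0 < k)
    (W : ℕ → Finset (V × Fin k)) (s : ℕ) :
    terr (subdivide A k) W s = ∅ ↔ ∀ c < k, classTerr A hk W c s = ∅ := by
  constructor
  · intro h c _
    ext v; simp [classTerr, h]
  · intro h
    ext p
    simp only [Finset.notMem_empty, iff_false]
    intro hp
    obtain ⟨v, φ⟩ := p
    have hsk : s ≤ (φ : ℕ) + s * k := by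
      have : s ≤ s * k := Nat.le_mul_of_pos_right s hk
      omega
    set c := ((φ : ℕ) + s * k - s) % k with hc
    have hck : c < k := Nat.mod_lt _ hk
    have hφ : ph hk (c + s) = φ := by
      apply Fin.ext
      show (c + s) % k = (φ : ℕ)
      rw [hc, Nat.mod_add_mod, Nat.sub_add_cancel hsk, Nat.add_mul_mod_self_right,
        Nat.mod_eq_of_lt φ.2]
    have hv : v ∈ classTerr A hk W c s := by
      simp only [classTerr, Finset.mem_filter, Finset.mem_univ, true_and, hφ]
      exact hp
    rw [h c hck] at hv
    exact absurd hv (Finset.notMem_empty v)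

lemma exists_enum {k : ℕ} (S : Finset V) (hS : S.card ≤ k) (v₀ : V) :
    ∃ f : Fin k → V, ∀ v ∈ S, ∃ j : Fin k, f j = v := by
  refine ⟨fun j => S.toList.getD j v₀, fun v hv => ?_⟩
  have hv' : v ∈ S.toList := Finset.mem_toList.mpr hv
  obtain ⟨n, hn, hget⟩ := List.mem_iff_getElem.mp hv'
  have hlen : S.toList.length = S.card := Finset.length_toList S
  have hnk : n < k := by omega
  refine ⟨⟨n, hnk⟩, ?_⟩
  show S.toList.getD n v₀ = v
  rw [List.getD_eq_getElem _ _ (by omega)]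
  exact hget

end Helpers


section Sweep

variable {V : Type} [Fintype V] [DecidableEq V]

lemma sweep (A : V → V → Prop) {k : ℕ} (hk : 0 < k)
    (Wt : ℕ → Finset (V × Fin k)) (c s0 : ℕ) (f : Fin k → V)
    (hs0 : 1 ≤ s0) (halign : (c + s0) % k = 0)
    (hsched : ∀ φ (hφ : φ < k), Wt (s0 + φ) = {(f ⟨φ, hφ⟩, ⟨φ, hφ⟩)})
    (X : Finset V) (hX : Nplus A (classTerr A hk Wt c (s0 - 1)) ⊆ X) :
    ∀ φ, ∀ hφ : φ < k, classTerr A hk Wt c (s0 + φ) ⊆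
      X \ Finset.univ.filter (fun v => ∃ ψ : Fin k, (ψ : ℕ) ≤ φ ∧ f ψ = v) := by
  have hmodphi : ∀ φ, φ < k → (c + (s0 + φ)) % k = φ := by
    intro φ hφ
    rw [show c + (s0 + φ) = (c + s0) + φ from by ring, ← Nat.mod_add_mod, halign,
      Nat.zero_add, Nat.mod_eq_of_lt hφ]
  intro φ
  induction φ with
  | zero =>
    intro hφ
    have hs : s0 + 0 = (s0 - 1) + 1 := by omega
    rw [hs, classTerr_succ]
    have hc1 : c + (s0 - 1) + 1 = c + s0 := by omega
    have hcross : (c + (s0 - 1) + 1) % k = 0 := by rw [hc1]; exact halign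
    rw [if_pos hcross, hc1, show s0 - 1 + 1 = s0 from by omega]
    apply Finset.sdiff_subset_sdiff hX
    intro v hv
    simp only [Finset.mem_filter, Finset.mem_univ, true_and] at hv ⊢
    obtain ⟨ψ, hψle, hψeq⟩ := hv
    have hψ : ψ = ⟨0, hk⟩ := Fin.ext (by show (ψ : ℕ) = 0; omega)
    have hph : ph hk (c + s0) = ⟨0, hk⟩ := Fin.ext (by
      show (c + s0) % k = 0; exact halign)
    rw [hph, show (s0 : ℕ) = s0 + 0 from by omega, hsched 0 hk]
    rw [hψ] at hψeq
    rw [← hψeq]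
    exact Finset.mem_singleton_self _
  | succ φ ih =>
    intro hφ1
    have hφ : φ < k := by omega
    rw [show s0 + (φ+1) = (s0 + φ) + 1 from by ring, classTerr_succ]
    have hcrossval : (c + (s0 + φ) + 1) % k = φ + 1 := by
      rw [show c + (s0 + φ) + 1 = c + (s0 + (φ+1)) from by ring]
      exact hmodphi (φ+1) hφ1
    rw [if_neg (by rw [hcrossval]; omega)]
    intro v hv
    rw [Finset.mem_sdiff] at hv
    obtain ⟨hv1, hv2⟩ := hv
    have h3 := ih hφ hv1
    rw [Finset.mem_sdiff] at h3
    rw [Finset.mem_sdiff]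
    refine ⟨h3.1, ?_⟩
    intro hmem
    simp only [Finset.mem_filter, Finset.mem_univ, true_and] at hmem
    obtain ⟨ψ, hψle, hψeq⟩ := hmem
    rcases Nat.lt_or_ge (ψ : ℕ) (φ+1) with hlt | hge
    · exact absurd (by
        simp only [Finset.mem_filter, Finset.mem_univ, true_and]
        exact ⟨ψ, by omega, hψeq⟩) h3.2
    · have hψv : ψ = ⟨φ+1, hφ1⟩ := Fin.ext (by show (ψ : ℕ) = φ + 1; omega)
      apply hv2
      simp only [Finset.mem_filter, Finset.mem_univ, true_and]
      have hph : ph hk (c + (s0 + φ) + 1) = ⟨φ+1, hφ1⟩ := Fin.ext (by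
        show (c + (s0 + φ) + 1) % k = φ + 1; exact hcrossval)
      rw [show (s0 + φ + 1 : ℕ) = s0 + (φ+1) from by ring, hsched (φ+1) hφ1, hph]
      rw [hψv] at hψeq
      rw [← hψeq]
      exact Finset.mem_singleton_self _

end Sweep

section Backward

variable {V : Type} [Fintype V] [DecidableEq V]

lemma step_sweep (A : V → V → Prop) {k : ℕ} (hk : 0 < k)
    (Wt : ℕ → Finset (V × Fin k)) (s0 : ℕ) (R : Finset V)
    (halign : s0 % k = 0)
    (hb : R ⊆ classTerr A hk Wt 0 s0)
    (hdisj : ∀ φ, φ < k → ∀ v ∈ R, (v, ph hk (s0 + φ)) ∉ Wt (s0 + φ)) :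
    ∀ φ, φ < k → R ⊆ classTerr A hk Wt 0 (s0 + φ) := by
  intro φ
  induction φ with
  | zero => intro _; rw [Nat.add_zero]; exact hb
  | succ φ ih =>
    intro hφ1
    have hφ : φ < k := by omega
    rw [show s0 + (φ+1) = (s0 + φ) + 1 from by ring, classTerr_succ, Nat.zero_add]
    have hmod : (s0 + φ + 1) % k = φ + 1 := by
      rw [show s0 + φ + 1 = s0 + (φ+1) from by ring, ← Nat.mod_add_mod, halign,
        Nat.zero_add, Nat.mod_eq_of_lt hφ1]
    rw [if_neg (by rw [hmod]; omega)]
    intro v hv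
    rw [Finset.mem_sdiff]
    refine ⟨ih hφ hv, ?_⟩
    intro hmem
    simp only [Finset.mem_filter, Finset.mem_univ, true_and] at hmem
    exact hdisj (φ+1) hφ1 v hv hmem

lemma backward_exists (A : V → V → Prop) {k : ℕ} (hk : 0 < k)
    (Wt : ℕ → Finset (V × Fin k)) (hWt : UsesAtMost Wt 1) (tt : ℕ)
    (htt : terr (subdivide A k) Wt tt = ∅) :
    ∃ W : ℕ → Finset V, UsesAtMost W k ∧ ∃ t, terr A W t = ∅ := by
  obtain ⟨W, hWdef⟩ : ∃ W : ℕ → Finset V,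
      W = fun i => (Finset.range k).biUnion (fun j => (Wt (i*k + j)).image Prod.fst) :=
    ⟨_, rfl⟩
  have hcard : UsesAtMost W k := by
    intro i
    rw [hWdef]
    calc ((Finset.range k).biUnion (fun j => (Wt (i*k + j)).image Prod.fst)).card
        ≤ ∑ j ∈ Finset.range k, ((Wt (i*k + j)).image Prod.fst).card :=
          Finset.card_biUnion_le
      _ ≤ ∑ _j ∈ Finset.range k, 1 :=
          Finset.sum_le_sum (fun j _ => (Finset.card_image_le).trans (hWt _))
      _ = k := by simp
  have hfilter : ∀ s (m : ℕ),
      Finset.univ.filter (fun v => (v, ph hk m) ∈ Wt s) ⊆ (Wt s).image Prod.fst := by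
    intro s m v hv
    simp only [Finset.mem_filter, Finset.mem_univ, true_and] at hv
    exact Finset.mem_image.mpr ⟨(v, ph hk m), hv, rfl⟩
  have hsub : ∀ i j, j < k → (Wt (i*k + j)).image Prod.fst ⊆ W i := by
    intro i j hj x hx
    rw [hWdef]
    exact Finset.mem_biUnion.mpr ⟨j, Finset.mem_range.mpr hj, hx⟩
  have hdisj : ∀ i φ, φ < k → ∀ v ∈ terr A W i, (v, ph hk (i*k + φ)) ∉ Wt (i*k + φ) := by
    intro i φ hφ v hv hmem
    exact notMem_of_mem_terr hv (hsub i φ hφ (Finset.mem_image.mpr ⟨_, hmem, rfl⟩))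
  have hmain : ∀ i φ, φ < k → terr A W i ⊆ classTerr A hk Wt 0 (i*k + φ) := by
    intro i
    induction i with
    | zero =>
      have hb : terr A W 0 ⊆ classTerr A hk Wt 0 (0*k) := by
        rw [Nat.zero_mul, terr_zero, classTerr_zero]
        apply Finset.sdiff_subset_sdiff (Finset.Subset.refl _)
        refine (hfilter 0 0).trans ?_
        have h := hsub 0 0 hk
        simpa using h
      exact step_sweep A hk Wt (0*k) (terr A W 0) (by simp) hb (hdisj 0)
    | succ i ih =>
      have hprev := ih (k-1) (by omega)
      have hkk : (i+1)*k = i*k + (k-1) + 1 := by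
        have h : (i+1)*k = i*k + k := by ring
        omega
      have hb : terr A W (i+1) ⊆ classTerr A hk Wt 0 ((i+1)*k) := by
        rw [terr_succ, hkk, classTerr_succ]
        have hcross : (0 + (i*k + (k-1)) + 1) % k = 0 := by
          rw [Nat.zero_add, ← hkk]
          exact Nat.mul_mod_left _ _
        rw [if_pos hcross, Nat.zero_add, ← hkk]
        intro v hv
        rw [Finset.mem_sdiff] at hv ⊢
        refine ⟨Nplus_mono hprev hv.1, fun hmem => hv.2 ?_⟩
        have h2 := (hfilter ((i+1)*k) ((i+1)*k)) hmem
        have h3 : (Wt ((i+1)*k)).image Prod.fst ⊆ W (i+1) := by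
          simpa using hsub (i+1) 0 hk
        exact h3 h2
      exact step_sweep A hk Wt ((i+1)*k) (terr A W (i+1)) (Nat.mul_mod_left _ _) hb (hdisj (i+1))
  refine ⟨W, hcard, tt, ?_⟩
  have h0 : classTerr A hk Wt 0 tt = ∅ := by
    ext v; simp [classTerr, htt]
  have h1 : classTerr A hk Wt 0 (tt*k + (k-1)) = ∅ := by
    apply classTerr_empty_mono A hk Wt 0 ?_ h0
    have : tt ≤ tt*k := Nat.le_mul_of_pos_right tt hk
    omega
  have h2 := hmain tt (k-1) (by omega)
  rw [h1] at h2
  exact Finset.subset_empty.mp h2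

end Backward

section Forward

variable {V : Type} [Fintype V] [DecidableEq V]

lemma forward_exists (A : V → V → Prop) {k : ℕ} (hk : 0 < k) (v₀ : V)
    (W : ℕ → Finset V) (hW : UsesAtMost W k) (t : ℕ) (ht : terr A W t = ∅) :
    ∃ Wt : ℕ → Finset (V × Fin k), UsesAtMost Wt 1 ∧ ∃ s, terr (subdivide A k) Wt s = ∅ := by
  choose e he using fun i => exists_enum (W i) (hW i) v₀
  obtain ⟨M, hMdef⟩ : ∃ M, M = k * (t + 1) := ⟨_, rfl⟩
  have hM : M = t * k + k := by rw [hMdef]; ring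
  obtain ⟨g, hgdef⟩ : ∃ g : ℕ → ℕ, g = fun c => 2 * M * c + (k - c) := ⟨_, rfl⟩
  obtain ⟨Wt, hWtdef⟩ : ∃ Wt : ℕ → Finset (V × Fin k),
      Wt = fun s =>
        if g (s / (2 * M)) ≤ s ∧ s < g (s / (2 * M)) + M ∧ s / (2 * M) < k then
          {(e ((s - g (s / (2 * M))) / k) ⟨(s - g (s / (2 * M))) % k, Nat.mod_lt _ hk⟩,
            ⟨(s - g (s / (2 * M))) % k, Nat.mod_lt _ hk⟩)}
        else ∅ := ⟨_, rfl⟩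
  have hgc : ∀ c, g c = 2 * M * c + (k - c) := by intro c; rw [hgdef]
  have hWt1 : UsesAtMost Wt 1 := by
    intro s
    rw [hWtdef]
    dsimp only
    split
    · simp
    · simp
  have hdecode : ∀ c, c < k → ∀ i, i ≤ t → ∀ φ, ∀ hφ : φ < k,
      Wt (g c + i * k + φ) = {(e i ⟨φ, hφ⟩, ⟨φ, hφ⟩)} := by
    intro c hc i hi φ hφ
    have hik : i * k ≤ t * k := Nat.mul_le_mul_right k hi
    have hdiv : (g c + i * k + φ) / (2 * M) = c := by
      apply Nat.div_eq_of_lt_le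
      · have h1 : c * (2 * M) = 2 * M * c := by ring
        rw [h1, hgc]; omega
      · have h2 : (c + 1) * (2 * M) = 2 * M * c + 2 * M := by ring
        rw [h2, hgc]; omega
    rw [hWtdef]
    dsimp only
    rw [hdiv]
    have hcond : g c ≤ g c + i * k + φ ∧ g c + i * k + φ < g c + M ∧ c < k := by
      refine ⟨by omega, ?_, hc⟩
      rw [hgc]; omega
    rw [if_pos hcond]
    have hsub : g c + i * k + φ - g c = i * k + φ := by omega
    rw [hsub]
    have hd2 : (i * k + φ) / k = i := by
      rw [show i * k + φ = k * i + φ from by ring, Nat.mul_add_div hk,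
        Nat.div_eq_of_lt hφ, Nat.add_zero]
    have hm2 : (i * k + φ) % k = φ := by
      rw [show i * k + φ = k * i + φ from by ring, Nat.mul_add_mod, Nat.mod_eq_of_lt hφ]
    have hfin : (⟨(i * k + φ) % k, Nat.mod_lt _ hk⟩ : Fin k) = ⟨φ, hφ⟩ := Fin.ext hm2
    rw [hd2, hfin]
  have hal : ∀ c, c < k → (c + g c) % k = 0 := by
    intro c hc
    have hrep : c + g c = k * (2 * (t + 1) * c + 1) := by
      have h2 : 2 * M * c = k * (2 * (t + 1) * c) := by rw [hMdef]; ring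
      have h3 : k * (2 * (t + 1) * c + 1) = k * (2 * (t + 1) * c) + k := by ring
      rw [hgc, h2, h3]; omega
    rw [hrep]
    exact Nat.mul_mod_right k _
  have hgpos : ∀ c, c < k → 1 ≤ g c := by
    intro c hc
    rw [hgc]; omega
  have hmain : ∀ c, c < k → ∀ i, i ≤ t →
      classTerr A hk Wt c (g c + i * k + (k - 1)) ⊆ terr A W i := by
    intro c hc i
    induction i with
    | zero =>
      intro _
      have hsw := sweep A hk Wt c (g c) (e 0) (hgpos c hc) (hal c hc)
        (fun φ hφ => by
          have h := hdecode c hc 0 (Nat.zero_le t) φ hφ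
          rwa [Nat.zero_mul, Nat.add_zero] at h)
        Finset.univ (Finset.subset_univ _) (k - 1) (by omega)
      rw [show g c + 0 * k + (k - 1) = g c + (k - 1) from by omega, terr_zero]
      refine hsw.trans (Finset.sdiff_subset_sdiff (Finset.Subset.refl _) ?_)
      intro v hv
      obtain ⟨j, hj⟩ := he 0 v hv
      simp only [Finset.mem_filter, Finset.mem_univ, true_and]
      exact ⟨j, by omega, hj⟩
    | succ i ih =>
      intro hi1
      have hi : i ≤ t := by omega
      have hprev := ih hi
      have hkk : (i + 1) * k = i * k + k := by ring
      have halign2 : (c + (g c + (i + 1) * k)) % k = 0 := by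
        rw [show c + (g c + (i + 1) * k) = (c + g c) + (i + 1) * k from by ring,
          Nat.add_mul_mod_self_right]
        exact hal c hc
      have hidx : g c + (i + 1) * k - 1 = g c + i * k + (k - 1) := by omega
      have hsw := sweep A hk Wt c (g c + (i + 1) * k) (e (i + 1))
        (by have := hgpos c hc; omega) halign2
        (fun φ hφ => hdecode c hc (i + 1) hi1 φ hφ)
        (Nplus A (terr A W i))
        (by rw [hidx]; exact Nplus_mono hprev)
        (k - 1) (by omega)
      rw [terr_succ]
      refine hsw.trans (Finset.sdiff_subset_sdiff (Finset.Subset.refl _) ?_)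
      intro v hv
      obtain ⟨j, hj⟩ := he (i + 1) v hv
      simp only [Finset.mem_filter, Finset.mem_univ, true_and]
      exact ⟨j, by omega, hj⟩
  obtain ⟨S, hSdef⟩ : ∃ S, S = (Finset.range k).sup (fun c => g c + t * k + (k - 1)) := ⟨_, rfl⟩
  refine ⟨Wt, hWt1, S, ?_⟩
  rw [terr_subdivide_empty_iff A hk]
  intro c hc
  have h1 : classTerr A hk Wt c (g c + t * k + (k - 1)) = ∅ := by
    have h := hmain c hc t (le_refl t)
    rw [ht] at h
    exact Finset.subset_empty.mp h
  have hle : g c + t * k + (k - 1) ≤ S := by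
    rw [hSdef]
    exact Finset.le_sup (f := fun c => g c + t * k + (k - 1)) (Finset.mem_range.mpr hc)
  exact classTerr_empty_mono A hk Wt c hle h1

end Forward

/-- If every vertex of `D` has out-degree at least one and `1 ≤ k ≤ |V|`, then
`cn(D) ≤ k` iff `cn(D̃) ≤ 1`. -/
theorem copNumber_le_iff_subdivide_copwin {V : Type} [Fintype V] [DecidableEq V]
    (A : V → V → Prop) (k : ℕ) (hk : 1 ≤ k) (hkn : k ≤ Fintype.card V)
    (hout : ∀ v : V, ∃ u, A v u) :
    copNumber A ≤ k ↔ copNumber (subdivide A k) ≤ 1 := by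
  have hk0 : 0 < k := hk
  have hV : Nonempty V := Fintype.card_pos_iff.mp (by omega)
  obtain ⟨v₀⟩ := hV
  rw [copNumber_le_iff, copNumber_le_iff]
  constructor
  · rintro ⟨W, hW, t, ht⟩
    exact forward_exists A hk0 v₀ W hW t ht
  · rintro ⟨Wt, hWt, tt, htt⟩
    exact backward_exists A hk0 Wt hWt tt htt
end

section
/- For all integers n and k with 0 ≤ k ≤ n, there exists a digraph D = (V, A) on n vertices with cn(D) ≤ k and exactly nk + (n − k)(n + k − 1)/2 arcs. In particular, the bound |A| ≤ nk + (n − k)(n + k − 1)/2 for k-copwin digraphs on n vertices is tight. -/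
open scoped Classical

/-- The number of arcs of the digraph with arc relation `A`. -/
noncomputable def numArcs {V : Type} [Fintype V] (A : V → V → Prop) : ℕ :=
  (Finset.univ.filter (fun p : V × V => A p.1 p.2)).card


lemma card_filter_val_lt (n m : ℕ) [inst : DecidablePred fun j : Fin n => (j : ℕ) < m] :
    (Finset.univ.filter (fun j : Fin n => (j : ℕ) < m)).card = min m n := by
  have himg : (Finset.univ.filter (fun j : Fin n => (j : ℕ) < m)).image Fin.val
      = Finset.range (min m n) := by
    ext a
    simp only [Finset.mem_image, Finset.mem_filter, Finset.mem_univ, true_and, Finset.mem_range,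
      Nat.lt_min]
    constructor
    · rintro ⟨j, hj, rfl⟩
      exact ⟨hj, j.isLt⟩
    · rintro ⟨h1, h2⟩
      exact ⟨⟨a, h2⟩, h1, rfl⟩
  rw [← Finset.card_range (min m n), ← himg,
    Finset.card_image_of_injective _ Fin.val_injective]

lemma gauss_aux (m k : ℕ) : m * (m - 1) / 2 + m * k = m * (m + 2 * k - 1) / 2 := by
  cases m with
  | zero => simp
  | succ j =>
    have h1 : (j + 1) * (j + 1 - 1) = (j + 1) * j := by rw [Nat.add_sub_cancel]
    have h2 : (j + 1) * (j + 1 + 2 * k - 1) = (j + 1) * j + (j + 1) * k * 2 := by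
      have h : j + 1 + 2 * k - 1 = j + 2 * k := by omega
      rw [h]; ring
    rw [h1, h2, Nat.add_mul_div_right _ _ (by norm_num : 0 < 2)]

lemma sum_min_eq (n k : ℕ) (hk : k ≤ n) :
    ∑ i ∈ Finset.range n, min (i + k) n = n * k + (n - k) * (n + k - 1) / 2 := by
  obtain ⟨m, rfl⟩ : ∃ m, n = m + k := ⟨n - k, by omega⟩
  rw [Finset.range_eq_Ico, ← Finset.sum_Ico_consecutive _ (Nat.zero_le m) (by omega : m ≤ m + k)]
  have h1 : ∑ i ∈ Finset.Ico 0 m, min (i + k) (m + k) = ∑ i ∈ Finset.Ico 0 m, (i + k) :=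
    Finset.sum_congr rfl (by intro i hi; simp only [Finset.mem_Ico] at hi; omega)
  have h2 : ∑ i ∈ Finset.Ico m (m + k), min (i + k) (m + k)
      = ∑ _i ∈ Finset.Ico m (m + k), (m + k) :=
    Finset.sum_congr rfl (by intro i hi; simp only [Finset.mem_Ico] at hi; omega)
  rw [h1, h2, Finset.sum_const, ← Finset.range_eq_Ico, Finset.sum_add_distrib,
    Finset.sum_const, Finset.sum_range_id, Finset.card_range, Nat.card_Ico]
  have h3 : m + k - m = k := by omega
  have h4 : m + k - k = m := by omega
  have h5 : m + k + k - 1 = m + 2 * k - 1 := by omega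
  rw [h3, h4, h5, smul_eq_mul, smul_eq_mul, gauss_aux, mul_comm (m + k) k, Nat.add_comm]

/-- The bound `|A| ≤ nk + (n-k)(n+k-1)/2` for `k`-copwin digraphs on `n` vertices is
tight: for all `0 ≤ k ≤ n` there is a digraph on `n` vertices with `cn(D) ≤ k` and
exactly `nk + (n-k)(n+k-1)/2` arcs. -/
theorem exists_copwin_digraph_with_max_arcs (n k : ℕ) (hk : k ≤ n) :
    ∃ A : Fin n → Fin n → Prop,
      copNumber A ≤ k ∧ numArcs A = n * k + (n - k) * (n + k - 1) / 2 := by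
  refine ⟨fun i j => (j : ℕ) < (i : ℕ) + k, ?_, ?_⟩
  · set A : Fin n → Fin n → Prop := fun i j => (j : ℕ) < (i : ℕ) + k with hA
    set W : ℕ → Finset (Fin n) :=
      fun i => Finset.univ.filter (fun v : Fin n => n ≤ (v : ℕ) + k + i ∧ (v : ℕ) + i < n) with hW
    apply Nat.sInf_le
    refine ⟨W, ?_, n - k, ?_⟩
    · intro i
      have hmem : ∀ v ∈ W i, (fun v : Fin n => (v : ℕ)) v ∈ Finset.Ico (n - k - i) (n - i) := by
        intro v hv
        simp only [hW, Finset.mem_filter] at hv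
        simp only [Finset.mem_Ico]
        omega
      have hinj : Set.InjOn (fun v : Fin n => (v : ℕ)) (W i) := by
        intro a _ b _ h
        exact Fin.val_injective h
      have := Finset.card_le_card_of_injOn _ hmem hinj
      rw [Nat.card_Ico] at this
      omega
    · have key : ∀ i, terr A W i ⊆ Finset.univ.filter (fun v : Fin n => (v : ℕ) + k + i < n) := by
        intro i
        induction i with
        | zero =>
          intro v hv
          simp only [terr, hW, Finset.mem_sdiff, Finset.mem_filter, Finset.mem_univ,
            true_and, not_and, not_lt, not_le] at hv
          have := v.isLt
          simp only [Finset.mem_filter, Finset.mem_univ, true_and]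
          omega
        | succ i ih =>
          intro v hv
          simp only [terr, Finset.mem_sdiff] at hv
          obtain ⟨hv1, hv2⟩ := hv
          simp only [Nplus, Finset.mem_filter, Finset.mem_univ, true_and] at hv1
          obtain ⟨x, hx, hxv⟩ := hv1
          have hx' := ih hx
          simp only [Finset.mem_filter, Finset.mem_univ, true_and] at hx'
          simp only [hW, Finset.mem_filter, Finset.mem_univ, true_and, not_and, not_lt,
            not_le] at hv2
          simp only [Finset.mem_filter, Finset.mem_univ, true_and]
          simp only [hA] at hxv
          omega
      refine Finset.subset_empty.mp ((key (n - k)).trans ?_)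
      intro v hv
      exfalso
      simp only [Finset.mem_filter] at hv
      omega
  · unfold numArcs
    rw [Finset.filter_congr_decidable, ← Finset.univ_product_univ, Finset.card_filter,
      Finset.sum_product]
    have inner : ∀ x : Fin n,
        (∑ y : Fin n, if (y : ℕ) < (x : ℕ) + k then 1 else 0) = min ((x : ℕ) + k) n := by
      intro x
      rw [← Finset.card_filter, card_filter_val_lt]
    calc (∑ x : Fin n, ∑ y : Fin n, if (y : ℕ) < (x : ℕ) + k then 1 else 0)
        = ∑ x : Fin n, min ((x : ℕ) + k) n := Finset.sum_congr rfl fun x _ => inner x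
      _ = ∑ i ∈ Finset.range n, min (i + k) n :=
          Fin.sum_univ_eq_sum_range (fun i => min (i + k) n) n
      _ = n * k + (n - k) * (n + k - 1) / 2 := sum_min_eq n k hk
end
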